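/- For every regular expression pattern P, every bindable node n of P, and every regular context language C, the type type(n, P, C) = { w | ∃ w' ∈ C, w' ⊢ P ⇒ V, V(n) = w } is a regular language. -/

import Mathlib

/-- Regular expression patterns over an alphabet `A`. -/
inductive Pat (A : Type) : Type
  | eps : Pat A
  | ch : A → Pat A
  | plus : Pat A → Pat A → Pat A
  | cat : Pat A → Pat A → Pat A
  | star : Pat A → Pat A

/-- The language of a pattern (the usual regular-expression language). -/
def Pat.lang {A : Type} : Pat A → Language A
  | .eps => 1
  | .ch a => {[a]}
  | .plus p q => p.lang + q.lang
  | .cat p q => p.lang * q.lang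
  | .star p => KStar.kstar p.lang

/-- Node addresses in the syntax tree of a pattern: `[]` is the root, `1 :: n`
addresses node `n` in the left child, `2 :: n` in the right child. -/
abbrev Node := List ℕ

/-- Bindable nodes: nodes of the syntax tree having no `*`-labeled ancestor
(the root is always bindable; below a `star` nothing is bindable). -/
def Pat.Bindable {A : Type} : Pat A → Node → Prop
  | _, [] => True
  | .plus p _, 1 :: n => p.Bindable n
  | .plus _ q, 2 :: n => q.Bindable n
  | .cat p _, 1 :: n => p.Bindable n
  | .cat _ q, 2 :: n => q.Bindable n
  | _, _ => False

/-- Associations: a map from node addresses to a matched subword (`some w`) or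
`⊥` (`none`). -/
abbrev Assoc (A : Type) := Node → Option (List A)

/-- The association `[λ → w]` binding only the root. -/
def single {A : Type} (w : List A) : Assoc A :=
  fun n => if n = [] then some w else none

/-- `V + P₂`: push the associations of `V` into the left branch of a
disjunction; all nodes of the right branch get `⊥`. -/
def orL {A : Type} (V : Assoc A) : Assoc A
  | [] => V []
  | 1 :: m => V m
  | _ => none

/-- `P₁ + V`: push the associations of `V` into the right branch of a
disjunction; all nodes of the left branch get `⊥`. -/
def orR {A : Type} (V : Assoc A) : Assoc A
  | [] => V []
  | 2 :: m => V m
  | _ => none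

/-- `V₁ · V₂`: the association for a concatenation node. -/
def catA {A : Type} (V₁ V₂ : Assoc A) : Assoc A
  | [] => match V₁ [], V₂ [] with
          | some u, some v => some (u ++ v)
          | _, _ => none
  | 1 :: m => V₁ m
  | 2 :: m => V₂ m
  | _ => none

mutual
/-- The matching relation `w ⊢ P ⇒ V` of the paper's Figure 2, with the
first-match policy for `+` (rules Or2/COr2) and the longest-match policy for
Kleene star in a concatenation (rule CKleene). -/
inductive Match {A : Type} : List A → Pat A → Assoc A → Prop
  | empty : Match [] .eps (single [])
  | lab (a : A) : Match [a] (.ch a) (single [a])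
  | kleeneEmpty (P : Pat A) : Match [] (.star P) (single [])
  | kleeneClosure {w₁ w₂ : List A} {P : Pat A} {V₁ V₂ : Assoc A} :
      Match w₁ P V₁ → Match w₂ (.star P) V₂ → w₁ ≠ [] →
      Match (w₁ ++ w₂) (.star P) (single (w₁ ++ w₂))
  | or1 {w : List A} {P₁ P₂ : Pat A} {V : Assoc A} :
      Match w P₁ V → Match w (.plus P₁ P₂) (orL V)
  | or2 {w : List A} {P₁ P₂ : Pat A} {V : Assoc A} :
      Match w P₂ V → w ∉ P₁.lang → Match w (.plus P₁ P₂) (orR V)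
  | celem {w₁ w₂ : List A} {P₁ P₂ : Pat A} {V₁ V₂ : Assoc A} :
      CMatch w₁ w₂ P₁ P₂ V₁ V₂ → Match (w₁ ++ w₂) (.cat P₁ P₂) (catA V₁ V₂)

/-- The auxiliary relation `(w₁, w₂) ⊢ P₁ · P₂ ⇒ (V₁, V₂)`: when matching
`w₁w₂` against `P₁ · P₂`, pattern `P₁` matches `w₁` yielding `V₁` and `P₂`
matches `w₂` yielding `V₂`. -/
inductive CMatch {A : Type} : List A → List A → Pat A → Pat A → Assoc A → Assoc A → Prop
  | cempty {w : List A} {P : Pat A} {V₂ : Assoc A} :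
      Match w P V₂ → CMatch [] w .eps P (single []) V₂
  | clab {a : A} {w : List A} {P : Pat A} {V₁ V₂ : Assoc A} :
      Match [a] (.ch a) V₁ → Match w P V₂ → CMatch [a] w (.ch a) P V₁ V₂
  | cor1 {w₁ w₂ : List A} {P₁ P₂ P₃ : Pat A} {V₁ V₂ : Assoc A} :
      CMatch w₁ w₂ P₁ P₃ V₁ V₂ →
      CMatch w₁ w₂ (.plus P₁ P₂) P₃ (orL V₁) V₂
  | cor2 {w₁ w₂ : List A} {P₁ P₂ P₃ : Pat A} {V₁ V₂ : Assoc A} :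
      CMatch w₁ w₂ P₂ P₃ V₁ V₂ → w₁ ++ w₂ ∉ (Pat.cat P₁ P₃).lang →
      CMatch w₁ w₂ (.plus P₁ P₂) P₃ (orR V₁) V₂
  | ccon {w₁ w₂ w₃ : List A} {P₁ P₂ P₃ : Pat A} {V₁ V₂ V₃ W : Assoc A} :
      CMatch w₁ (w₂ ++ w₃) P₁ (.cat P₂ P₃) V₁ W →
      CMatch w₂ w₃ P₂ P₃ V₂ V₃ →
      CMatch (w₁ ++ w₂) w₃ (.cat P₁ P₂) P₃ (catA V₁ V₂) V₃
  | ckleene {w₁ w₂ : List A} {P₁ P₂ : Pat A} {V₁ V₂ : Assoc A} :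
      Match w₁ (.star P₁) V₁ → Match w₂ P₂ V₂ →
      (¬ ∃ w₃ w₄, w₃ ≠ [] ∧ w₂ = w₃ ++ w₄ ∧
        w₁ ++ w₃ ∈ (Pat.star P₁).lang ∧ w₄ ∈ P₂.lang) →
      CMatch w₁ w₂ (.star P₁) P₂ V₁ V₂
end

/-- The type of node `n` of pattern `P` relative to a context language `C`:
all subwords that `n` can be associated with when matching a word of `C`
against `P`. -/
def typeOf {A : Type} (n : Node) (P : Pat A) (C : Set (List A)) : Set (List A) :=
  {w | ∃ w' ∈ C, ∃ V, Match w' P V ∧ V n = some w}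

/-!
By the Myhill–Nerode theorem a language is regular iff it has finitely many left quotients;
explicit formulas for the quotients of `L * M` and `L∗` show that regular languages are closed
under concatenation and star. A derivation of `CMatch w₁ w₂ P Q V₁ V₂` exists exactly when
`w₁, w₂` is the split of `w₁ ++ w₂` prescribed by the disambiguation policies
(`P.CatSplit Q.lang`) and both halves match. This split relation is recognizable, i.e. a finite
union of products of regular languages, so the contexts
`{u | ∃ v, u ++ v ∈ C ∧ P₁.CatSplit P₂.lang u v}` and `{v | ∃ u, …}` seen by the children of a
concatenation are regular; the children of `P₁ + P₂` see `C ⊓ P₁.lang` and `C ⊓ P₁.langᶜ`.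
Induction on the node reduces everything to the root, whose type is `C ⊓ P.lang`.
-/

open Computability

namespace Language

variable {α : Type*} {L M : Language α} {x : List α}

@[simp]
theorem mem_sSup {S : Set (Language α)} {y : List α} : y ∈ sSup S ↔ ∃ K ∈ S, y ∈ K := Iff.rfl

theorem isRegular_of_forall_leftQuotient_mem {s : Set (Language α)} (hs : s.Finite)
    (h : ∀ x, L.leftQuotient x ∈ s) : L.IsRegular :=
  .of_finite_range_leftQuotient (hs.subset (Set.range_subset_iff.2 h))

theorem IsRegular.leftQuotient (hL : L.IsRegular) (x : List α) :
    (L.leftQuotient x).IsRegular :=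
  isRegular_of_forall_leftQuotient_mem hL.finite_range_leftQuotient fun y =>
    ⟨x ++ y, L.leftQuotient_append x y⟩

theorem IsRegular.setOf_leftQuotient_mem (hL : L.IsRegular) (S : Set (Language α)) :
    IsRegular {x | L.leftQuotient x ∈ S} :=
  isRegular_of_forall_leftQuotient_mem
    (hL.finite_range_leftQuotient.image fun K => {x | K.leftQuotient x ∈ S}) fun y =>
    ⟨L.leftQuotient y, ⟨y, rfl⟩, Set.ext fun x => by
      change (L.leftQuotient y).leftQuotient x ∈ S ↔ L.leftQuotient (y ++ x) ∈ S
      rw [leftQuotient_append]⟩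

theorem isRegular_of_finite (hL : Set.Finite (L : Set (List α))) : L.IsRegular :=
  isRegular_of_forall_leftQuotient_mem (hL.biUnion fun w _ => w.tails.finite_toSet).powerset
    fun x y hy => Set.mem_biUnion hy ((List.mem_tails _ _).2 (List.suffix_append x y))

theorem isRegular_sSup {S : Set (Language α)} (hS : S.Finite) (h : ∀ K ∈ S, K.IsRegular) :
    (sSup S).IsRegular :=
  isRegular_of_forall_leftQuotient_mem
    ((hS.biUnion fun K hK => (h K hK).finite_range_leftQuotient).powerset.image sSup) fun x =>
    ⟨(·.leftQuotient x) '' S, by rintro _ ⟨K, hK, rfl⟩; exact Set.mem_biUnion hK ⟨x, rfl⟩,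
      by ext y; simp⟩

theorem leftQuotient_mul (x : List α) :
    (L * M).leftQuotient x =
      L.leftQuotient x * M + sSup (M.leftQuotient '' {v | ∃ u ∈ L, x = u ++ v}) := by
  ext w
  simp only [mem_leftQuotient, mem_add, mem_mul, mem_sSup, Set.mem_image, Set.mem_ofPred_eq]
  constructor
  · rintro ⟨a, ha, b, hb, e⟩
    rcases List.append_eq_append_iff.1 e with ⟨c, rfl, rfl⟩ | ⟨c, rfl, rfl⟩
    · exact .inr ⟨_, ⟨c, ⟨a, ha, rfl⟩, rfl⟩, hb⟩
    · exact .inl ⟨c, ha, b, hb, rfl⟩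
  · rintro (⟨a, ha, b, hb, rfl⟩ | ⟨_, ⟨v, ⟨u, hu, rfl⟩, rfl⟩, hw⟩)
    · exact ⟨_, ha, b, hb, List.append_assoc _ _ _⟩
    · exact ⟨u, hu, _, hw, (List.append_assoc _ _ _).symm⟩

theorem IsRegular.mul (hL : L.IsRegular) (hM : M.IsRegular) : (L * M).IsRegular :=
  isRegular_of_forall_leftQuotient_mem
    (hL.finite_range_leftQuotient.image2 (fun K S => K * M + sSup S)
      hM.finite_range_leftQuotient.powerset) fun x =>
    ⟨_, ⟨x, rfl⟩, _, Set.image_subset_range _ _, (leftQuotient_mul x).symm⟩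

theorem exists_of_append_mem_kstar {w : List α} (h : x ++ w ∈ L∗) (hx : x ≠ []) :
    ∃ u v a b, x = u ++ v ∧ w = a ++ b ∧ u ∈ L∗ ∧ v ≠ [] ∧ v ++ a ∈ L ∧ b ∈ L∗ := by
  obtain ⟨S, e, hS⟩ := mem_kstar.1 h
  clear h
  induction S generalizing x with
  | nil => exact absurd (List.append_eq_nil_iff.1 e).1 hx
  | cons l S ih =>
    have hl := hS l List.mem_cons_self
    have hS' : ∀ y ∈ S, y ∈ L := fun y hy => hS y (List.mem_cons_of_mem _ hy)
    rcases List.append_eq_append_iff.1 e with ⟨a, rfl, rfl⟩ | ⟨c, rfl, e'⟩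
    · exact ⟨[], x, a, _, rfl, rfl, nil_mem_kstar _, hx, hl, join_mem_kstar hS'⟩
    · rcases eq_or_ne c [] with rfl | hc
      · rw [List.append_nil] at hx ⊢
        rw [List.nil_append] at e'
        exact ⟨[], l, [], w, rfl, rfl, nil_mem_kstar _, hx, by rwa [List.append_nil],
          e' ▸ join_mem_kstar hS'⟩
      · obtain ⟨u, v, a, b, rfl, rfl, hu, hv, hva, hb⟩ := ih hc e'.symm hS'
        exact ⟨l ++ u, v, a, b, by simp, rfl, mul_kstar_le_kstar (a := L) ⟨l, hl, u, hu, rfl⟩,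
          hv, hva, hb⟩

theorem leftQuotient_kstar (hx : x ≠ []) :
    L∗.leftQuotient x = sSup (L.leftQuotient '' {v | v ≠ [] ∧ ∃ u ∈ L∗, x = u ++ v}) * L∗ := by
  ext w
  simp only [mem_leftQuotient, mem_mul, mem_sSup, Set.mem_image, Set.mem_ofPred_eq]
  constructor
  · intro h
    obtain ⟨u, v, a, b, rfl, rfl, hu, hv, hva, hb⟩ := exists_of_append_mem_kstar h hx
    exact ⟨a, ⟨_, ⟨v, ⟨hv, u, hu, rfl⟩, rfl⟩, hva⟩, b, hb, rfl⟩
  · rintro ⟨a, ⟨_, ⟨v, ⟨-, u, hu, rfl⟩, rfl⟩, hva⟩, b, hb, rfl⟩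
    have : (v ++ a) ++ b ∈ L∗ := mul_kstar_le_kstar (a := L) ⟨_, hva, b, hb, rfl⟩
    have : u ++ ((v ++ a) ++ b) ∈ L∗ := (kstar_mul_kstar L).le ⟨u, hu, _, this, rfl⟩
    simpa only [List.append_assoc] using this

theorem IsRegular.kstar (hL : L.IsRegular) : L∗.IsRegular :=
  isRegular_of_forall_leftQuotient_mem
    ((hL.finite_range_leftQuotient.powerset.image fun S => sSup S * L∗).insert L∗) fun x => by
    rcases eq_or_ne x [] with rfl | hx
    · exact .inl rfl
    · exact .inr ⟨_, Set.image_subset_range _ _, (leftQuotient_kstar hx).symm⟩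

variable {K : Language α} {w₁ w₂ : List α}

def IsLongestSplit (K M : Language α) (w₁ w₂ : List α) : Prop :=
  w₁ ∈ K ∧ w₂ ∈ M ∧ ¬∃ u v, u ≠ [] ∧ w₂ = u ++ v ∧ w₁ ++ u ∈ K ∧ v ∈ M

theorem exists_isLongestSplit (h₁ : w₁ ∈ K) (h₂ : w₂ ∈ M) :
    ∃ v₁ v₂, w₁ ++ w₂ = v₁ ++ v₂ ∧ K.IsLongestSplit M v₁ v₂ := by
  induction hn : w₂.length using Nat.strong_induction_on generalizing w₁ w₂ with
  | _ n ih =>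
    by_cases h : ∃ u v, u ≠ [] ∧ w₂ = u ++ v ∧ w₁ ++ u ∈ K ∧ v ∈ M
    · obtain ⟨u, v, hu, rfl, hK, hM⟩ := h
      obtain ⟨v₁, v₂, e, hv⟩ :=
        ih v.length (by simp [← hn, List.length_pos_iff.2 hu]) hK hM rfl
      exact ⟨v₁, v₂, by simpa using e, hv⟩
    · exact ⟨w₁, w₂, rfl, h₁, h₂, h⟩

theorem IsLongestSplit.unique {w₁' w₂' : List α} (h : K.IsLongestSplit M w₁ w₂)
    (h' : K.IsLongestSplit M w₁' w₂') (e : w₁ ++ w₂ = w₁' ++ w₂') : w₁ = w₁' := by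
  rcases List.append_eq_append_iff.1 e with ⟨u, rfl, rfl⟩ | ⟨u, rfl, rfl⟩
  · by_contra hne
    exact h.2.2 ⟨u, w₂', by simpa using hne, rfl, h'.1, h'.2.1⟩
  · by_contra hne
    exact h'.2.2 ⟨u, w₂, by simpa using hne, rfl, h.1, h.2.1⟩

def IsRecognizableRel (R : List α → List α → Prop) : Prop :=
  ∃ s : Set (Language α × Language α), s.Finite ∧ (∀ p ∈ s, p.1.IsRegular ∧ p.2.IsRegular) ∧
    ∀ x y, R x y ↔ ∃ p ∈ s, x ∈ p.1 ∧ y ∈ p.2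

variable {R S : List α → List α → Prop}

theorem IsRecognizableRel.of_iff (h : IsRecognizableRel R) (e : ∀ x y, R x y ↔ S x y) :
    IsRecognizableRel S := by
  obtain ⟨s, hs, hreg, hR⟩ := h
  exact ⟨s, hs, hreg, fun x y => (e x y).symm.trans (hR x y)⟩

theorem isRecognizableRel_prod (hL : L.IsRegular) (hM : M.IsRegular) :
    IsRecognizableRel fun x y => x ∈ L ∧ y ∈ M :=
  ⟨{(L, M)}, Set.finite_singleton _, by simp [hL, hM], by simp⟩

theorem IsRecognizableRel.exists {ι : Type*} [Finite ι] {R : ι → List α → List α → Prop}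
    (h : ∀ i, IsRecognizableRel (R i)) : IsRecognizableRel fun x y => ∃ i, R i x y := by
  choose s hs hreg hR using h
  refine ⟨⋃ i, s i, Set.finite_iUnion hs, ?_, fun x y => ?_⟩
  · intro p hp
    obtain ⟨i, hi⟩ := Set.mem_iUnion.1 hp
    exact hreg i p hi
  · simp only [hR, Set.mem_iUnion]
    aesop

theorem IsRecognizableRel.or (hR : IsRecognizableRel R) (hS : IsRecognizableRel S) :
    IsRecognizableRel fun x y => R x y ∨ S x y := by
  obtain ⟨s, hs, hreg, hR⟩ := hR
  obtain ⟨t, ht, hreg', hS⟩ := hS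
  refine ⟨s ∪ t, hs.union ht, fun p hp => hp.elim (hreg p) (hreg' p), fun x y => ?_⟩
  simp only [hR, hS, Set.mem_union, or_and_right, exists_or]

theorem IsRecognizableRel.and (hR : IsRecognizableRel R) (hS : IsRecognizableRel S) :
    IsRecognizableRel fun x y => R x y ∧ S x y := by
  obtain ⟨s, hs, hreg, hR⟩ := hR
  obtain ⟨t, ht, hreg', hS⟩ := hS
  refine ⟨Set.image2 (fun p q => (p.1 ⊓ q.1, p.2 ⊓ q.2)) s t, hs.image2 _ ht, ?_, fun x y => ?_⟩
  · rintro _ ⟨p, hp, q, hq, rfl⟩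
    exact ⟨(hreg p hp).1.inf (hreg' q hq).1, (hreg p hp).2.inf (hreg' q hq).2⟩
  · simp only [hR, hS, Set.mem_image2]
    aesop

theorem isRecognizableRel_of_leftQuotient {C : Language α} (hC : C.IsRegular)
    {G : Language α → Language α} (hG : ∀ x, (G (C.leftQuotient x)).IsRegular) :
    IsRecognizableRel fun x y => y ∈ G (C.leftQuotient x) := by
  refine ⟨(fun K => ({x | C.leftQuotient x ∈ ({K} : Set _)}, G K)) '' Set.range C.leftQuotient,
    hC.finite_range_leftQuotient.image _, ?_, fun x y => ?_⟩
  · rintro _ ⟨_, ⟨x, rfl⟩, rfl⟩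
    exact ⟨hC.setOf_leftQuotient_mem _, hG x⟩
  · constructor
    · exact fun hy => ⟨_, ⟨_, ⟨x, rfl⟩, rfl⟩, rfl, hy⟩
    · rintro ⟨_, ⟨_, ⟨z, rfl⟩, rfl⟩, hx, hy⟩
      rwa [show C.leftQuotient x = C.leftQuotient z from hx]

theorem isRecognizableRel_append_mem {C : Language α} (hC : C.IsRegular) :
    IsRecognizableRel fun x y => x ++ y ∈ C :=
  isRecognizableRel_of_leftQuotient hC (G := id) hC.leftQuotient

theorem isRecognizableRel_isLongestSplit (hK : K.IsRegular) (hM : M.IsRegular) :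
    IsRecognizableRel (K.IsLongestSplit M) :=
  ((isRecognizableRel_prod hK hM).and (isRecognizableRel_of_leftQuotient hK
    (G := fun Q => ((Q ⊓ 1ᶜ) * M)ᶜ) fun x =>
      (((hK.leftQuotient x).inf (isRegular_of_finite (Set.finite_singleton [])).compl).mul
        hM).compl)).of_iff fun x y => by
    refine and_assoc.trans (and_congr_right' (and_congr_right' (not_congr ⟨?_, ?_⟩)))
    · rintro ⟨u, ⟨hu, hne⟩, v, hv, rfl⟩
      exact ⟨u, v, hne, rfl, hu, hv⟩
    · rintro ⟨u, v, hne, rfl, hu, hv⟩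
      exact ⟨u, ⟨hu, hne⟩, v, hv, rfl⟩

theorem IsRecognizableRel.exists_split (hR : IsRecognizableRel R) (hS : IsRecognizableRel S) :
    IsRecognizableRel fun a b => ∃ x y, a = x ++ y ∧ R x (y ++ b) ∧ S y b := by
  obtain ⟨s, hs, hreg, hR⟩ := hR
  obtain ⟨t, ht, hreg', hS⟩ := hS
  have := hs.to_subtype
  have := ht.to_subtype
  -- `b` only needs to know the quotient `p.2.leftQuotient y` for `y ++ b ∈ p.2`.
  have : ∀ p : s, Finite (Set.range (p.1.2.leftQuotient)) :=
    fun p => (hreg p p.2).2.finite_range_leftQuotient.to_subtype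
  refine (IsRecognizableRel.exists fun p : s => .exists fun q : t =>
    .exists fun K : Set.range p.1.2.leftQuotient => isRecognizableRel_prod
      ((hreg p p.2).1.mul (((hreg p p.2).2.setOf_leftQuotient_mem {K.1}).inf (hreg' q q.2).1))
      ((K.2.choose_spec ▸ (hreg p p.2).2.leftQuotient _).inf (hreg' q q.2).2)).of_iff
    fun a b => ⟨?_, ?_⟩
  · rintro ⟨p, q, K, ⟨x, hx, y, ⟨hyK, hy⟩, rfl⟩, hbK, hb⟩
    have hyb : b ∈ p.1.2.leftQuotient y := (show p.1.2.leftQuotient y = K from hyK) ▸ hbK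
    exact ⟨x, y, rfl, (hR _ _).2 ⟨p, p.2, hx, hyb⟩, (hS _ _).2 ⟨q, q.2, hy, hb⟩⟩
  · rintro ⟨x, y, rfl, hxy, hyb⟩
    obtain ⟨p, hp, hx, hyb'⟩ := (hR _ _).1 hxy
    obtain ⟨q, hq, hy, hb⟩ := (hS _ _).1 hyb
    exact ⟨⟨p, hp⟩, ⟨q, hq⟩, ⟨_, y, rfl⟩, ⟨x, hx, y, ⟨rfl, hy⟩, rfl⟩, hyb', hb⟩

theorem IsRecognizableRel.isRegular_fst (h : IsRecognizableRel R) :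
    IsRegular {x | ∃ y, R x y} := by
  obtain ⟨s, hs, hreg, hR⟩ := h
  have e : {x | ∃ y, R x y} = sSup (Prod.fst '' {p ∈ s | ∃ y, y ∈ p.2}) := by
    ext x
    refine (exists_congr fun y => hR x y).trans ⟨?_, ?_⟩
    · rintro ⟨y, p, hp, hx, hy⟩
      exact mem_sSup.2 ⟨p.1, ⟨p, ⟨hp, y, hy⟩, rfl⟩, hx⟩
    · rintro ⟨_, ⟨p, ⟨hp, y, hy⟩, rfl⟩, hx⟩
      exact ⟨y, p, hp, hx, hy⟩
  rw [e]
  exact isRegular_sSup ((hs.sep _).image _) (by rintro _ ⟨p, hp, rfl⟩; exact (hreg p hp.1).1)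

theorem IsRecognizableRel.isRegular_snd (h : IsRecognizableRel R) :
    IsRegular {y | ∃ x, R x y} := by
  obtain ⟨s, hs, hreg, hR⟩ := h
  have e : {y | ∃ x, R x y} = sSup (Prod.snd '' {p ∈ s | ∃ x, x ∈ p.1}) := by
    ext y
    refine (exists_congr fun x => hR x y).trans ⟨?_, ?_⟩
    · rintro ⟨x, p, hp, hx, hy⟩
      exact mem_sSup.2 ⟨p.2, ⟨p, ⟨hp, x, hx⟩, rfl⟩, hy⟩
    · rintro ⟨_, ⟨p, ⟨hp, x, hx⟩, rfl⟩, hy⟩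
      exact ⟨x, p, hp, hx, hy⟩
  rw [e]
  exact isRegular_sSup ((hs.sep _).image _) (by rintro _ ⟨p, hp, rfl⟩; exact (hreg p hp.1).2)

end Language

namespace Pat

variable {α : Type}

theorem isRegular_lang : ∀ P : Pat α, P.lang.IsRegular
  | eps => Language.isRegular_of_finite (Set.finite_singleton [])
  | ch a => Language.isRegular_of_finite (Set.finite_singleton [a])
  | plus P Q => P.isRegular_lang.add Q.isRegular_lang
  | cat P Q => P.isRegular_lang.mul Q.isRegular_lang
  | star P => P.isRegular_lang.kstar

/-- `P.CatSplit M w₁ w₂`: when `w₁ ++ w₂` is matched against `P` followed by a pattern with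
language `M`, the first-match and longest-match policies give `w₁` to `P`. -/
def CatSplit : Pat α → Language α → List α → List α → Prop
  | eps, M, w₁, w₂ => w₁ = [] ∧ w₂ ∈ M
  | ch a, M, w₁, w₂ => w₁ = [a] ∧ w₂ ∈ M
  | plus P₁ P₂, M, w₁, w₂ =>
      P₁.CatSplit M w₁ w₂ ∨ (P₂.CatSplit M w₁ w₂ ∧ w₁ ++ w₂ ∉ P₁.lang * M)
  | cat P₁ P₂, M, w₁, w₂ =>
      ∃ u v, w₁ = u ++ v ∧ P₁.CatSplit (P₂.lang * M) u (v ++ w₂) ∧ P₂.CatSplit M v w₂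
  | star P, M, w₁, w₂ => P.lang∗.IsLongestSplit M w₁ w₂

theorem CatSplit.mem_lang : ∀ {P : Pat α} {M : Language α} {w₁ w₂ : List α},
    P.CatSplit M w₁ w₂ → w₁ ∈ P.lang ∧ w₂ ∈ M
  | eps, _, _, _, ⟨rfl, h⟩ => ⟨rfl, h⟩
  | ch _, _, _, _, ⟨rfl, h⟩ => ⟨rfl, h⟩
  | plus _ _, _, _, _, .inl h => ⟨.inl h.mem_lang.1, h.mem_lang.2⟩
  | plus _ _, _, _, _, .inr ⟨h, _⟩ => ⟨.inr h.mem_lang.1, h.mem_lang.2⟩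
  | cat _ _, _, _, _, ⟨_, _, rfl, h₁, h₂⟩ =>
      ⟨⟨_, h₁.mem_lang.1, _, h₂.mem_lang.1, rfl⟩, h₂.mem_lang.2⟩
  | star _, _, _, _, h => ⟨h.1, h.2.1⟩

theorem CatSplit.unique : ∀ {P : Pat α} {M : Language α} {w₁ w₂ w₁' w₂' : List α},
    P.CatSplit M w₁ w₂ → P.CatSplit M w₁' w₂' → w₁ ++ w₂ = w₁' ++ w₂' → w₁ = w₁'
  | eps, _, _, _, _, _, ⟨rfl, _⟩, ⟨rfl, _⟩, _ => rfl
  | ch _, _, _, _, _, _, ⟨rfl, _⟩, ⟨rfl, _⟩, _ => rfl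
  | plus _ _, _, _, _, _, _, .inl h, .inl h', e => h.unique h' e
  | plus _ _, _, _, _, _, _, .inl h, .inr ⟨_, hn⟩, e =>
      absurd (e ▸ ⟨_, h.mem_lang.1, _, h.mem_lang.2, rfl⟩) hn
  | plus _ _, _, _, _, _, _, .inr ⟨_, hn⟩, .inl h', e =>
      absurd (e ▸ ⟨_, h'.mem_lang.1, _, h'.mem_lang.2, rfl⟩) hn
  | plus _ _, _, _, _, _, _, .inr ⟨h, _⟩, .inr ⟨h', _⟩, e => h.unique h' e
  | cat _ _, _, _, _, _, _, ⟨u, v, rfl, h₁, h₂⟩, ⟨u', v', rfl, h₁', h₂'⟩, e => by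
    obtain rfl := h₁.unique h₁' (by simpa using e)
    obtain rfl := h₂.unique h₂' (by simpa using e)
    rfl
  | star _, _, _, _, _, _, h, h', e => Language.IsLongestSplit.unique h h' e

theorem CatSplit.of_mul : ∀ {P : Pat α} {L M : Language α} {w u v : List α},
    P.CatSplit (L * M) w (u ++ v) → u ∈ L → v ∈ M → P.CatSplit L w u
  | eps, _, _, _, _, _, ⟨rfl, _⟩, hu, _ => ⟨rfl, hu⟩
  | ch _, _, _, _, _, _, ⟨rfl, _⟩, hu, _ => ⟨rfl, hu⟩
  | plus _ _, _, _, _, _, _, .inl h, hu, hv => .inl (h.of_mul hu hv)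
  | plus _ _, _, _, _, _, _, .inr ⟨h, hn⟩, hu, hv => .inr ⟨h.of_mul hu hv, fun hm => hn <| by
      rw [← mul_assoc]
      exact ⟨_, hm, _, hv, List.append_assoc _ _ _⟩⟩
  | cat P₁ P₂, L, M, _, u, v, ⟨x, y, rfl, h₁, h₂⟩, hu, hv => by
    have h₂' := h₂.of_mul hu hv
    rw [← mul_assoc, ← List.append_assoc] at h₁
    exact ⟨x, y, rfl, h₁.of_mul ⟨_, h₂'.mem_lang.1, _, hu, rfl⟩ hv, h₂'⟩
  | star _, _, _, _, _, v, ⟨hw, _, hn⟩, hu, hv => ⟨hw, hu, fun ⟨s, t, hs, e, hst, ht⟩ =>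
      hn ⟨s, t ++ v, hs, by rw [e, List.append_assoc], hst, ⟨t, ht, v, hv, rfl⟩⟩⟩

theorem exists_catSplit : ∀ {P : Pat α} {M : Language α} {w₁ w₂ : List α},
    w₁ ∈ P.lang → w₂ ∈ M → ∃ v₁ v₂, w₁ ++ w₂ = v₁ ++ v₂ ∧ P.CatSplit M v₁ v₂
  | eps, _, _, w₂, rfl, h₂ => ⟨[], w₂, rfl, rfl, h₂⟩
  | ch a, _, _, w₂, rfl, h₂ => ⟨[a], w₂, rfl, rfl, h₂⟩
  | plus P₁ P₂, M, w₁, w₂, h₁, h₂ => by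
    by_cases h : w₁ ++ w₂ ∈ P₁.lang * M
    · obtain ⟨a, ha, b, hb, e⟩ := h
      obtain ⟨v₁, v₂, e', hs⟩ := exists_catSplit ha hb
      exact ⟨v₁, v₂, e.symm.trans e', .inl hs⟩
    · have h₁ : w₁ ∈ P₂.lang := h₁.resolve_left fun h₁ => h ⟨_, h₁, _, h₂, rfl⟩
      obtain ⟨v₁, v₂, e, hs⟩ := exists_catSplit h₁ h₂
      exact ⟨v₁, v₂, e, .inr ⟨hs, e ▸ h⟩⟩
  | cat P₁ P₂, M, _, w₂, ⟨a, ha, b, hb, rfl⟩, h₂ => by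
    obtain ⟨x, r, e, hs₁⟩ := exists_catSplit (M := P₂.lang * M) ha ⟨b, hb, w₂, h₂, rfl⟩
    obtain ⟨c, hc, d, hd, rfl⟩ := hs₁.mem_lang.2
    obtain ⟨y, z, e', hs₂⟩ := exists_catSplit hc hd
    exact ⟨x ++ y, z, by simp [← e', ← e], x, y, rfl, e' ▸ hs₁, hs₂⟩
  | star _, _, _, _, h₁, h₂ => Language.exists_isLongestSplit h₁ h₂

theorem isRecognizableRel_catSplit : ∀ (P : Pat α) {M : Language α}, M.IsRegular →
    Language.IsRecognizableRel (P.CatSplit M)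
  | eps, _, hM => Language.isRecognizableRel_prod (isRegular_lang eps) hM
  | ch a, _, hM => Language.isRecognizableRel_prod (isRegular_lang (ch a)) hM
  | plus P₁ P₂, _, hM => (P₁.isRecognizableRel_catSplit hM).or
      ((P₂.isRecognizableRel_catSplit hM).and
        (Language.isRecognizableRel_append_mem (P₁.isRegular_lang.mul hM).compl))
  | cat P₁ P₂, _, hM => (P₁.isRecognizableRel_catSplit (P₂.isRegular_lang.mul hM)).exists_split
      (P₂.isRecognizableRel_catSplit hM)
  | star P, _, hM => Language.isRecognizableRel_isLongestSplit P.isRegular_lang.kstar hM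

end Pat

section Matching

variable {α : Type}

mutual

theorem Match.mem_lang {w : List α} {P : Pat α} {V : Assoc α} : Match w P V → w ∈ P.lang
  | .empty => rfl
  | .lab _ => rfl
  | .kleeneEmpty _ => Language.nil_mem_kstar _
  | .kleeneClosure h₁ h₂ _ =>
      mul_kstar_le_kstar (a := Pat.lang _) ⟨_, h₁.mem_lang, _, h₂.mem_lang, rfl⟩
  | .or1 h => .inl h.mem_lang
  | .or2 h _ => .inr h.mem_lang
  | .celem h => ⟨_, h.catSplit.mem_lang.1, _, h.catSplit.mem_lang.2, rfl⟩

theorem CMatch.catSplit {w₁ w₂ : List α} {P Q : Pat α} {V₁ V₂ : Assoc α} :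
    CMatch w₁ w₂ P Q V₁ V₂ → P.CatSplit Q.lang w₁ w₂
  | .cempty h => ⟨rfl, h.mem_lang⟩
  | .clab _ h => ⟨rfl, h.mem_lang⟩
  | .cor1 h => .inl h.catSplit
  | .cor2 h hn => .inr ⟨h.catSplit, hn⟩
  | .ccon h₁ h₂ => ⟨_, _, rfl, h₁.catSplit, h₂.catSplit⟩
  | .ckleene h₁ h₂ hn => ⟨h₁.mem_lang, h₂.mem_lang, hn⟩

end

theorem cmatch_iff {P Q : Pat α} {w₁ w₂ : List α} {V₁ V₂ : Assoc α} :
    CMatch w₁ w₂ P Q V₁ V₂ ↔ P.CatSplit Q.lang w₁ w₂ ∧ Match w₁ P V₁ ∧ Match w₂ Q V₂ := by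
  induction P generalizing Q w₁ w₂ V₁ V₂ with
  | eps =>
    refine ⟨fun h => ?_, fun ⟨_, h₁, h₂⟩ => ?_⟩
    · cases h with | cempty h => exact ⟨⟨rfl, h.mem_lang⟩, .empty, h⟩
    · cases h₁ with | empty => exact .cempty h₂
  | ch a =>
    refine ⟨fun h => ?_, fun ⟨_, h₁, h₂⟩ => ?_⟩
    · cases h with | clab h₁ h₂ => exact ⟨⟨rfl, h₂.mem_lang⟩, h₁, h₂⟩
    · cases h₁ with | lab => exact .clab (.lab a) h₂
  | plus P₁ P₂ ih₁ ih₂ =>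
    refine ⟨fun h => ?_, fun ⟨hs, h₁, h₂⟩ => ?_⟩
    · cases h with
      | cor1 h =>
        obtain ⟨hs, h₁, h₂⟩ := ih₁.1 h
        exact ⟨.inl hs, .or1 h₁, h₂⟩
      | cor2 h hn =>
        obtain ⟨hs, h₁, h₂⟩ := ih₂.1 h
        exact ⟨.inr ⟨hs, hn⟩, .or2 h₁ fun h₁' => hn ⟨_, h₁', _, h₂.mem_lang, rfl⟩, h₂⟩
    · cases h₁ with
      | or1 h₁ =>
        refine hs.elim (fun hs => .cor1 (ih₁.2 ⟨hs, h₁, h₂⟩)) fun ⟨_, hn⟩ => ?_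
        exact absurd ⟨_, h₁.mem_lang, _, h₂.mem_lang, rfl⟩ hn
      | or2 h₁ hn₁ =>
        refine hs.elim (fun hs => absurd hs.mem_lang.1 hn₁) fun ⟨hs, hn⟩ => ?_
        exact .cor2 (ih₂.2 ⟨hs, h₁, h₂⟩) hn
  | cat P₁ P₂ ih₁ ih₂ =>
    refine ⟨fun h => ?_, fun ⟨⟨a, b, e, hs₁, hs₂⟩, h₁, h₂⟩ => ?_⟩
    · cases h with
      | ccon h₁ h₂ =>
        obtain ⟨hs₁, m₁, -⟩ := ih₁.1 h₁
        obtain ⟨hs₂, m₂, m₃⟩ := ih₂.1 h₂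
        exact ⟨⟨_, _, rfl, hs₁, hs₂⟩,
          .celem (ih₁.2 ⟨hs₁.of_mul m₂.mem_lang m₃.mem_lang, m₁, m₂⟩), m₃⟩
    · cases h₁ with
      | celem h =>
        obtain ⟨hs, m₁, m₂⟩ := ih₁.1 h
        obtain rfl := hs.unique (hs₁.of_mul hs₂.mem_lang.1 hs₂.mem_lang.2) e
        obtain rfl := List.append_cancel_left e
        have c₂ := ih₂.2 ⟨hs₂, m₂, h₂⟩
        exact .ccon (ih₁.2 ⟨hs₁, m₁, .celem c₂⟩) c₂
  | star P =>
    refine ⟨fun h => ?_, fun ⟨⟨_, _, hn⟩, h₁, h₂⟩ => .ckleene h₁ h₂ hn⟩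
    cases h with | ckleene h₁ h₂ hn => exact ⟨⟨h₁.mem_lang, h₂.mem_lang, hn⟩, h₁, h₂⟩

theorem Match.apply_nil {w : List α} {P : Pat α} {V : Assoc α} (h : Match w P V) :
    V [] = some w := by
  induction P generalizing w V with
  | eps | ch _ => cases h; rfl
  | star _ => cases h <;> rfl
  | plus P₁ P₂ ih₁ ih₂ =>
    cases h with
    | or1 h => exact (ih₁ h :)
    | or2 h _ => exact (ih₂ h :)
  | cat P₁ P₂ ih₁ ih₂ =>
    cases h with
    | celem h =>
      obtain ⟨-, h₁, h₂⟩ := cmatch_iff.1 h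
      simp [catA, ih₁ h₁, ih₂ h₂]

theorem Pat.exists_match {P : Pat α} {w : List α} (h : w ∈ P.lang) : ∃ V, Match w P V := by
  induction P generalizing w with
  | eps => exact (show w = [] from h) ▸ ⟨_, .empty⟩
  | ch a => exact (show w = [a] from h) ▸ ⟨_, .lab a⟩
  | plus P₁ P₂ ih₁ ih₂ =>
    by_cases h₁ : w ∈ P₁.lang
    · obtain ⟨V, hV⟩ := ih₁ h₁
      exact ⟨_, .or1 hV⟩
    · obtain ⟨V, hV⟩ := ih₂ (h.resolve_left h₁)
      exact ⟨_, .or2 hV h₁⟩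
  | cat P₁ P₂ ih₁ ih₂ =>
    obtain ⟨a, ha, b, hb, rfl⟩ := Language.mem_mul.1 h
    obtain ⟨a', b', e, hs⟩ := exists_catSplit ha hb
    obtain ⟨V₁, h₁⟩ := ih₁ hs.mem_lang.1
    obtain ⟨V₂, h₂⟩ := ih₂ hs.mem_lang.2
    rw [e]
    exact ⟨_, .celem (cmatch_iff.2 ⟨hs, h₁, h₂⟩)⟩
  | star P ih =>
    obtain ⟨S, rfl, hS⟩ := Language.mem_kstar_iff_exists_nonempty.1 h
    clear h
    induction S with
    | nil => exact ⟨_, .kleeneEmpty P⟩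
    | cons y S ihS =>
      obtain ⟨V₁, h₁⟩ := ih (hS y List.mem_cons_self).1
      obtain ⟨V₂, h₂⟩ := ihS fun z hz => hS z (List.mem_cons_of_mem _ hz)
      exact ⟨_, .kleeneClosure h₁ h₂ (hS y List.mem_cons_self).2⟩

end Matching

section TypeOf

variable {α : Type} (P₁ P₂ : Pat α) (m : Node) (C : Language α)

theorem typeOf_nil (P : Pat α) : typeOf [] P C = C ⊓ P.lang := by
  ext w
  constructor
  · rintro ⟨w', hC, V, h, hV⟩
    obtain rfl : w' = w := Option.some_injective _ (h.apply_nil.symm.trans hV)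
    exact ⟨hC, h.mem_lang⟩
  · rintro ⟨hC, hw⟩
    obtain ⟨V, h⟩ := Pat.exists_match hw
    exact ⟨w, hC, V, h, h.apply_nil⟩

theorem typeOf_plus_left : typeOf (1 :: m) (.plus P₁ P₂) C = typeOf m P₁ (C ⊓ P₁.lang) := by
  ext w
  constructor
  · rintro ⟨w', hC, V, h, hV⟩
    cases h with
    | or1 h => exact ⟨w', ⟨hC, h.mem_lang⟩, _, h, hV⟩
    | or2 => simp [orR] at hV
  · rintro ⟨w', ⟨hC, -⟩, V, h, hV⟩
    exact ⟨w', hC, _, .or1 h, hV⟩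

theorem typeOf_plus_right : typeOf (2 :: m) (.plus P₁ P₂) C = typeOf m P₂ (C ⊓ P₁.langᶜ) := by
  ext w
  constructor
  · rintro ⟨w', hC, V, h, hV⟩
    cases h with
    | or1 => simp [orL] at hV
    | or2 h hn => exact ⟨w', ⟨hC, hn⟩, _, h, hV⟩
  · rintro ⟨w', ⟨hC, hn⟩, V, h, hV⟩
    exact ⟨w', hC, _, .or2 h hn, hV⟩

theorem typeOf_cat_left :
    typeOf (1 :: m) (.cat P₁ P₂) C =
      typeOf m P₁ {u | ∃ v, u ++ v ∈ C ∧ P₁.CatSplit P₂.lang u v} := by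
  ext w
  constructor
  · rintro ⟨w', hC, V, h, hV⟩
    cases h with
    | celem h =>
      obtain ⟨hs, h₁, -⟩ := cmatch_iff.1 h
      exact ⟨_, ⟨_, hC, hs⟩, _, h₁, hV⟩
  · rintro ⟨u, ⟨v, hC, hs⟩, V, h₁, hV⟩
    obtain ⟨V₂, h₂⟩ := Pat.exists_match hs.mem_lang.2
    exact ⟨_, hC, _, .celem (cmatch_iff.2 ⟨hs, h₁, h₂⟩), hV⟩

theorem typeOf_cat_right :
    typeOf (2 :: m) (.cat P₁ P₂) C =
      typeOf m P₂ {v | ∃ u, u ++ v ∈ C ∧ P₁.CatSplit P₂.lang u v} := by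
  ext w
  constructor
  · rintro ⟨w', hC, V, h, hV⟩
    cases h with
    | celem h =>
      obtain ⟨hs, -, h₂⟩ := cmatch_iff.1 h
      exact ⟨_, ⟨_, hC, hs⟩, _, h₂, hV⟩
  · rintro ⟨v, ⟨u, hC, hs⟩, V, h₂, hV⟩
    obtain ⟨V₁, h₁⟩ := Pat.exists_match hs.mem_lang.1
    exact ⟨_, hC, _, .celem (cmatch_iff.2 ⟨hs, h₁, h₂⟩), hV⟩

end TypeOf

/-- For every pattern `P`, every bindable node `n` of `P`, and
every regular context language `C`, the type `type(n, P, C)` is a regular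
language. -/
theorem typeOf_isRegular {A : Type} [Fintype A] (P : Pat A) (n : Node)
    (hn : P.Bindable n) (C : Language A) (hC : C.IsRegular) :
    Language.IsRegular (typeOf n P (C : Set (List A)) : Language A) := by
  induction n generalizing P C with
  | nil => rw [typeOf_nil]; exact hC.inf P.isRegular_lang
  | cons i m ih =>
    have splits (P₁ P₂ : Pat A) := (Language.isRecognizableRel_append_mem hC).and
      (P₁.isRecognizableRel_catSplit P₂.isRegular_lang)
    match P, i, hn with
    | .plus P₁ P₂, 1, hn =>
      rw [typeOf_plus_left]
      exact ih P₁ hn _ (hC.inf P₁.isRegular_lang)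
    | .plus P₁ P₂, 2, hn =>
      rw [typeOf_plus_right]
      exact ih P₂ hn _ (hC.inf P₁.isRegular_lang.compl)
    | .cat P₁ P₂, 1, hn =>
      rw [typeOf_cat_left]
      exact ih P₁ hn _ (splits P₁ P₂).isRegular_fst
    | .cat P₁ P₂, 2, hn =>
      rw [typeOf_cat_right]
      exact ih P₂ hn _ (splits P₁ P₂).isRegular_snd
    | .eps, _, hn | .ch _, _, hn | .star _, _, hn => simp [Pat.Bindable] at hn
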